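/- For every τ in the upper half-plane ℍ, λ(τ) ≠ 0 and λ(τ) ≠ 1, and the lambda function satisfies λ(−(τ+1)/τ) = 1 − 1/λ(τ) and λ(−1/(τ+1)) = 1/(1 − λ(τ)), where −(τ+1)/τ and −1/(τ+1) are the images of τ under the fractional linear actions of W = [[−1,−1],[1,0]] and W² = [[0,1],[−1,−1]] in SL₂(ℤ). -/

import Mathlib

noncomputable def theta00 (τ : ℂ) : ℂ :=
  ∑' n : ℤ, Complex.exp (Real.pi * Complex.I * (n : ℂ) ^ 2 * τ)

/-- Theta constant `θ01(τ) = ∑_{n∈ℤ} (−1)ⁿ exp(πi n² τ)`. -/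
noncomputable def theta01 (τ : ℂ) : ℂ :=
  ∑' n : ℤ, (-1 : ℂ) ^ n * Complex.exp (Real.pi * Complex.I * (n : ℂ) ^ 2 * τ)

/-- Theta constant `θ10(τ) = ∑_{n∈ℤ} exp(πi (n+1/2)² τ)`. -/
noncomputable def theta10 (τ : ℂ) : ℂ :=
  ∑' n : ℤ, Complex.exp (Real.pi * Complex.I * ((n : ℂ) + 1/2) ^ 2 * τ)

/-- The lambda function `λ(τ) = θ10(τ)⁴ / θ00(τ)⁴`. -/
noncomputable def lambdaFn (τ : ℂ) : ℂ := theta10 τ ^ 4 / theta00 τ ^ 4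

/-!
In terms of `jacobiTheta₂` one has `θ00 = ϑ(0, τ)`, `θ01 = ϑ(1/2, τ)` and
`θ10 = e^{πiτ/4} ϑ(τ/2, τ)`. Hence `T : τ ↦ τ + 1` and (by the functional equation of `ϑ`)
`S : τ ↦ -1/τ` permute the three theta constants up to nonvanishing factors. Splitting the double
series of `ϑ(z, τ) ϑ(w, τ)` according to the parity of `m + n` gives the duplication formulas and
with them Jacobi's identity `θ00⁴ = θ01⁴ + θ10⁴`.

The locus where no theta constant vanishes is therefore invariant under `SL(2, ℤ) = ⟨S, T⟩`, and
every orbit meets `Im τ ≥ 1/2`, where each `q`-series is dominated by its leading term. So `λ ≠ 0`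
and `1 - λ = θ01⁴ / θ00⁴ ≠ 0`. Finally `λ ∘ S = 1 - λ` and `λ ∘ T = λ / (λ - 1)`, and
`W = T⁻¹ S`, `W² = S T` as Möbius maps.
-/

open Complex Real

lemma Complex.ne_zero_of_im_pos {τ : ℂ} (hτ : 0 < τ.im) : τ ≠ 0 := by
  rintro rfl
  simp at hτ

lemma im_neg_one_div_pos {τ : ℂ} (hτ : 0 < τ.im) : 0 < (-1 / τ).im := by
  simpa [neg_div, inv_neg] using UpperHalfPlane.im_inv_neg_coe_pos ⟨τ, hτ⟩

lemma jacobiTheta₂_add_one_right (z τ : ℂ) :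
    jacobiTheta₂ z (τ + 1) = jacobiTheta₂ (z + 1 / 2) τ := by
  refine tsum_congr fun n ↦ ?_
  obtain ⟨k, hk⟩ := Int.even_mul_pred_self n
  have hk' : (n : ℂ) ^ 2 = n + (k + k) := by
    rw [← sub_eq_iff_eq_add']; exact_mod_cast (by rw [← hk]; ring : n ^ 2 - n = k + k)
  refine Complex.exp_eq_exp_iff_exists_int.mpr ⟨k, ?_⟩
  linear_combination (π * I) * hk'

def Int.parityPairEquiv : (ℤ × ℤ) ⊕ (ℤ × ℤ) ≃ ℤ × ℤ where
  toFun := Sum.elim (fun p ↦ (p.1 + p.2, p.1 - p.2)) (fun p ↦ (p.1 + p.2 + 1, p.1 - p.2))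
  invFun p := if Even (p.1 + p.2) then .inl ((p.1 + p.2) / 2, (p.1 - p.2) / 2)
    else .inr ((p.1 + p.2 - 1) / 2, (p.1 - p.2 - 1) / 2)
  left_inv := by
    rintro (⟨a, b⟩ | ⟨a, b⟩) <;> simp only [Sum.elim_inl, Sum.elim_inr, Int.even_iff] <;>
      split_ifs <;> first | omega | simp only [Sum.inl.injEq, Sum.inr.injEq, Prod.mk.injEq]; omega
  right_inv := by
    rintro ⟨m, n⟩
    simp only [Int.even_iff]
    split_ifs <;> simp only [Sum.elim_inl, Sum.elim_inr, Prod.mk.injEq] <;> omega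

lemma hasSum_jacobiTheta₂_term_mul (z w : ℂ) {τ : ℂ} (hτ : 0 < τ.im) :
    HasSum (fun p : ℤ × ℤ ↦ jacobiTheta₂_term p.1 z τ * jacobiTheta₂_term p.2 w τ)
      (jacobiTheta₂ z τ * jacobiTheta₂ w τ) := by
  have hz : Summable fun n : ℤ ↦ ‖jacobiTheta₂_term n z τ‖ :=
    summable_norm_iff.mpr (hasSum_jacobiTheta₂_term z hτ).summable
  have hw : Summable fun n : ℤ ↦ ‖jacobiTheta₂_term n w τ‖ :=
    summable_norm_iff.mpr (hasSum_jacobiTheta₂_term w hτ).summable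
  have hzw := summable_mul_of_summable_norm hz hw
  exact HasSum.mul (f := (jacobiTheta₂_term · z τ)) (g := (jacobiTheta₂_term · w τ))
    (hasSum_jacobiTheta₂_term z hτ) (hasSum_jacobiTheta₂_term w hτ) hzw

lemma jacobiTheta₂_mul_jacobiTheta₂ (z w : ℂ) {τ : ℂ} (hτ : 0 < τ.im) :
    jacobiTheta₂ z τ * jacobiTheta₂ w τ =
      jacobiTheta₂ (z + w) (2 * τ) * jacobiTheta₂ (z - w) (2 * τ) +
        cexp (2 * π * I * z + π * I * τ) *
          (jacobiTheta₂ (z + w + τ) (2 * τ) * jacobiTheta₂ (z - w + τ) (2 * τ)) := by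
  have h2τ : 0 < (2 * τ).im := by simpa using hτ
  have heven := hasSum_jacobiTheta₂_term_mul (z + w) (z - w) h2τ
  have hodd := (hasSum_jacobiTheta₂_term_mul (z + w + τ) (z - w + τ) h2τ).mul_left
    (cexp (2 * π * I * z + π * I * τ))
  refine (hasSum_jacobiTheta₂_term_mul z w hτ).unique <| Int.parityPairEquiv.hasSum_iff.mp <|
    HasSum.sum (heven.congr_fun fun p ↦ ?_) (hodd.congr_fun fun p ↦ ?_) <;>
  · simp only [Function.comp_apply, Int.parityPairEquiv, Equiv.coe_fn_mk, Sum.elim_inl,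
      Sum.elim_inr, jacobiTheta₂_term, ← Complex.exp_add]
    congr 1
    push_cast
    ring

lemma theta00_eq_jacobiTheta₂ (τ : ℂ) : theta00 τ = jacobiTheta₂ 0 τ :=
  tsum_congr fun n ↦ by simp [jacobiTheta₂_term]

lemma theta01_eq_jacobiTheta₂ (τ : ℂ) : theta01 τ = jacobiTheta₂ (1 / 2) τ := by
  refine tsum_congr fun n ↦ ?_
  rw [jacobiTheta₂_term, ← exp_pi_mul_I, ← exp_int_mul, ← Complex.exp_add]
  ring_nf

lemma theta10_eq_jacobiTheta₂ (τ : ℂ) :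
    theta10 τ = cexp (π * I * τ / 4) * jacobiTheta₂ (τ / 2) τ := by
  rw [jacobiTheta₂, ← tsum_mul_left]
  refine tsum_congr fun n ↦ ?_
  rw [jacobiTheta₂_term, ← Complex.exp_add]
  ring_nf

lemma theta00_add_one (τ : ℂ) : theta00 (τ + 1) = theta01 τ := by
  rw [theta00_eq_jacobiTheta₂, theta01_eq_jacobiTheta₂, jacobiTheta₂_add_one_right, zero_add]

lemma theta01_add_one (τ : ℂ) : theta01 (τ + 1) = theta00 τ := by
  rw [theta00_eq_jacobiTheta₂, theta01_eq_jacobiTheta₂, jacobiTheta₂_add_one_right, add_halves,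
    ← zero_add 1, jacobiTheta₂_add_left]

lemma theta10_add_one (τ : ℂ) : theta10 (τ + 1) = cexp (π * I / 4) * theta10 τ := by
  rw [theta10_eq_jacobiTheta₂, theta10_eq_jacobiTheta₂, jacobiTheta₂_add_one_right,
    show (τ + 1) / 2 + 1 / 2 = τ / 2 + 1 by ring, jacobiTheta₂_add_left, ← mul_assoc,
    ← Complex.exp_add]
  ring_nf

lemma neg_I_mul_cpow_half_ne_zero {τ : ℂ} (hτ : 0 < τ.im) : (-I * τ) ^ (1 / 2 : ℂ) ≠ 0 := by
  simpa [cpow_eq_zero_iff] using ne_zero_of_im_pos hτ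

lemma theta00_neg_inv {τ : ℂ} (hτ : 0 < τ.im) :
    theta00 (-1 / τ) = (-I * τ) ^ (1 / 2 : ℂ) * theta00 τ := by
  rw [theta00_eq_jacobiTheta₂, theta00_eq_jacobiTheta₂, jacobiTheta₂_functional_equation 0 τ,
    ← mul_assoc, ← mul_assoc, mul_one_div_cancel (neg_I_mul_cpow_half_ne_zero hτ)]
  simp

lemma theta01_neg_inv {τ : ℂ} (hτ : 0 < τ.im) :
    theta01 (-1 / τ) = (-I * τ) ^ (1 / 2 : ℂ) * theta10 τ := by
  have hτ0 := ne_zero_of_im_pos hτ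
  have hc := mul_one_div_cancel (neg_I_mul_cpow_half_ne_zero hτ)
  have he : cexp (π * I * τ / 4) * cexp (-π * I * (τ / 2) ^ 2 / τ) = 1 := by
    rw [← Complex.exp_add, ← Complex.exp_zero]
    congr 1
    field_simp
    ring
  rw [theta01_eq_jacobiTheta₂, theta10_eq_jacobiTheta₂, jacobiTheta₂_functional_equation (τ / 2) τ,
    div_div_cancel_left' hτ0, ← one_div]
  linear_combination (-(cexp (π * I * τ / 4) * cexp (-π * I * (τ / 2) ^ 2 / τ)) *
    jacobiTheta₂ (1 / 2) (-1 / τ)) * hc - jacobiTheta₂ (1 / 2) (-1 / τ) * he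

lemma theta10_neg_inv {τ : ℂ} (hτ : 0 < τ.im) :
    theta10 (-1 / τ) = (-I * τ) ^ (1 / 2 : ℂ) * theta01 τ := by
  rw [theta10_eq_jacobiTheta₂, theta01_eq_jacobiTheta₂, jacobiTheta₂_functional_equation (1 / 2) τ,
    ← mul_assoc, ← mul_assoc, mul_one_div_cancel (neg_I_mul_cpow_half_ne_zero hτ), one_mul,
    show (-1 / τ) / 2 = -((1 / 2) / τ) by ring, jacobiTheta₂_neg_left]
  congr 2
  ring

lemma theta10_two_mul (τ : ℂ) :
    theta10 (2 * τ) = cexp (π * I * τ / 2) * jacobiTheta₂ τ (2 * τ) := by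
  rw [theta10_eq_jacobiTheta₂, mul_div_cancel_left₀ τ two_ne_zero]
  ring_nf

lemma exp_pi_mul_I_div_two_sq (τ : ℂ) : cexp (π * I * τ / 2) ^ 2 = cexp (π * I * τ) := by
  rw [← Complex.exp_nat_mul]
  ring_nf

lemma theta00_sq {τ : ℂ} (hτ : 0 < τ.im) :
    theta00 τ ^ 2 = theta00 (2 * τ) ^ 2 + theta10 (2 * τ) ^ 2 := by
  have h := jacobiTheta₂_mul_jacobiTheta₂ 0 0 hτ
  simp only [add_zero, sub_zero, zero_add, mul_zero] at h
  rw [theta00_eq_jacobiTheta₂, theta00_eq_jacobiTheta₂, theta10_two_mul, mul_pow,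
    exp_pi_mul_I_div_two_sq]
  linear_combination h

lemma theta01_sq {τ : ℂ} (hτ : 0 < τ.im) :
    theta01 τ ^ 2 = theta00 (2 * τ) ^ 2 - theta10 (2 * τ) ^ 2 := by
  have h := jacobiTheta₂_mul_jacobiTheta₂ (1 / 2) (1 / 2) hτ
  have h1 : jacobiTheta₂ 1 (2 * τ) = jacobiTheta₂ 0 (2 * τ) := by
    simpa using jacobiTheta₂_add_left 0 (2 * τ)
  rw [add_halves, sub_self, zero_add, add_comm 1 τ, jacobiTheta₂_add_left, h1,
    show 2 * π * I * (1 / 2) + π * I * τ = π * I * τ + π * I by ring, Complex.exp_add,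
    exp_pi_mul_I] at h
  rw [theta01_eq_jacobiTheta₂, theta00_eq_jacobiTheta₂, theta10_two_mul, mul_pow,
    exp_pi_mul_I_div_two_sq]
  linear_combination h

lemma theta10_sq {τ : ℂ} (hτ : 0 < τ.im) :
    theta10 τ ^ 2 = 2 * theta00 (2 * τ) * theta10 (2 * τ) := by
  have h := jacobiTheta₂_mul_jacobiTheta₂ (τ / 2) (τ / 2) hτ
  rw [add_halves, sub_self, zero_add, ← zero_add (τ + τ), ← two_mul, jacobiTheta₂_add_left',
    ← mul_assoc, ← mul_assoc, ← Complex.exp_add,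
    show 2 * π * I * (τ / 2) + π * I * τ + -π * I * (2 * τ + 2 * 0) = 0 by ring,
    Complex.exp_zero, one_mul] at h
  rw [theta10_eq_jacobiTheta₂, theta00_eq_jacobiTheta₂, theta10_two_mul, mul_pow,
    ← Complex.exp_nat_mul, show ((2 : ℕ) : ℂ) * (π * I * τ / 4) = π * I * τ / 2 by push_cast; ring]
  linear_combination cexp (π * I * τ / 2) * h

theorem theta00_pow_four {τ : ℂ} (hτ : 0 < τ.im) :
    theta00 τ ^ 4 = theta01 τ ^ 4 + theta10 τ ^ 4 := by
  linear_combination (theta00 τ ^ 2 + theta00 (2 * τ) ^ 2 + theta10 (2 * τ) ^ 2) * theta00_sq hτ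
    - (theta01 τ ^ 2 + theta00 (2 * τ) ^ 2 - theta10 (2 * τ) ^ 2) * theta01_sq hτ
    - (theta10 τ ^ 2 + 2 * theta00 (2 * τ) * theta10 (2 * τ)) * theta10_sq hτ

lemma ne_zero_of_hasSum_of_norm_le_pow {E : Type*} [NormedRing E] [NormOneClass E] {f : ℕ → E}
    {s : E} {r : ℝ} (hf : HasSum f s) (h0 : f 0 = 1) (hr : r < 1 / 2)
    (hle : ∀ n, ‖f (n + 1)‖ ≤ r ^ (n + 1)) : s ≠ 0 := by
  have hr0 : 0 ≤ r := (norm_nonneg _).trans (by simpa using hle 0)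
  have hgeom : HasSum (fun n ↦ r ^ (n + 1)) (r / (1 - r)) := by
    simpa [pow_succ', div_eq_mul_inv] using
      (hasSum_geometric_of_lt_one hr0 (by linarith)).mul_left r
  have htail : HasSum (fun n ↦ f (n + 1)) (s - 1) := by
    simpa [h0] using (hasSum_nat_add_iff' 1).mpr hf
  have hdist : ‖s - 1‖ ≤ r / (1 - r) := htail.norm_le_of_bounded hgeom hle
  rintro rfl
  rw [zero_sub, norm_neg, norm_one, le_div_iff₀ (by linarith)] at hdist
  linarith

lemma exp_neg_pi_mul_lt_one_third {t : ℝ} (ht : 1 / 2 ≤ t) : rexp (-π * t) < 1 / 3 := by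
  have hquad := quadratic_le_exp_of_nonneg (x := π / 2) (by positivity)
  calc rexp (-π * t) ≤ rexp (-(π / 2)) := exp_le_exp.mpr (by nlinarith [pi_pos])
    _ = (rexp (π / 2))⁻¹ := Real.exp_neg _
    _ < 1 / 3 := by
      rw [one_div, inv_lt_inv₀ (exp_pos _) (by norm_num)]
      nlinarith [pi_gt_three]

lemma theta00_ne_zero_of_half_le_im {τ : ℂ} (h : 1 / 2 ≤ τ.im) : theta00 τ ≠ 0 := by
  have hr := exp_neg_pi_mul_lt_one_third h
  have hbound := norm_jacobiTheta_sub_one_le (τ := τ) (by linarith)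
  intro h0
  change jacobiTheta τ = 0 at h0
  rw [h0, zero_sub, norm_neg, norm_one, div_mul_eq_mul_div, le_div_iff₀ (by linarith)] at hbound
  linarith

lemma theta01_ne_zero_of_half_le_im {τ : ℂ} (h : 1 / 2 ≤ τ.im) : theta01 τ ≠ 0 := by
  rw [← theta00_add_one]
  exact theta00_ne_zero_of_half_le_im (by simpa using h)

lemma theta10_ne_zero_of_half_le_im {τ : ℂ} (h : 1 / 2 ≤ τ.im) : theta10 τ ≠ 0 := by
  have hτ : 0 < τ.im := by linarith
  set g : ℤ → ℂ := fun n ↦ jacobiTheta₂_term n (τ / 2) τ with hg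
  have hsymm (n : ℕ) : g (-(n + 1)) = g n := by
    simp only [hg, jacobiTheta₂_term]
    congr 1
    push_cast
    ring
  have hnat : HasSum (fun n : ℕ ↦ g n) (jacobiTheta₂ (τ / 2) τ / 2) := by
    refine ((hasSum_jacobiTheta₂_term (τ / 2) hτ).nat_add_neg_add_one.div_const 2).congr_fun
      fun n ↦ ?_
    change g n = (g n + g (-(n + 1))) / 2
    rw [hsymm, add_self_div_two]
  have hle (n : ℕ) : ‖g (n + 1 : ℕ)‖ ≤ rexp (-π * τ.im) ^ (n + 1) := by
    rw [hg, norm_jacobiTheta₂_term, ← Real.exp_nat_mul, Complex.div_ofNat_im]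
    refine exp_le_exp.mpr ?_
    push_cast
    nlinarith [mul_nonneg (mul_pos pi_pos hτ).le (sq_nonneg ((n : ℝ) + 1))]
  have hJ := ne_zero_of_hasSum_of_norm_le_pow hnat (by simp [hg, jacobiTheta₂_term])
    (by linarith [exp_neg_pi_mul_lt_one_third h]) hle
  rw [theta10_eq_jacobiTheta₂]
  exact mul_ne_zero (Complex.exp_ne_zero _) (div_ne_zero_iff.mp hJ).1

open UpperHalfPlane ModularGroup MulAction MatrixGroups Pointwise in
lemma theta_ne_zero {τ : ℂ} (hτ : 0 < τ.im) :
    theta00 τ ≠ 0 ∧ theta01 τ ≠ 0 ∧ theta10 τ ≠ 0 := by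
  let s : Set ℍ := {τ | theta00 τ ≠ 0 ∧ theta01 τ ≠ 0 ∧ theta10 τ ≠ 0}
  have hS : S ∈ stabilizer SL(2, ℤ) s := mem_stabilizer_set.mpr fun τ ↦ by
    have hcoe : ((S • τ : ℍ) : ℂ) = -1 / τ := by
      rw [modular_S_smul, coe_mk, inv_neg, neg_div, one_div]
    simp only [s, Set.mem_ofPred_eq, hcoe, theta00_neg_inv τ.im_pos, theta01_neg_inv τ.im_pos,
      theta10_neg_inv τ.im_pos, mul_ne_zero_iff]
    have := neg_I_mul_cpow_half_ne_zero τ.im_pos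
    tauto
  have hT : T ∈ stabilizer SL(2, ℤ) s := mem_stabilizer_set.mpr fun τ ↦ by
    have hcoe : ((T • τ : ℍ) : ℂ) = τ + 1 := by
      rw [modular_T_smul, coe_vadd, ofReal_one, add_comm]
    simp only [s, Set.mem_ofPred_eq, hcoe, theta00_add_one, theta01_add_one, theta10_add_one,
      mul_ne_zero_iff]
    have := Complex.exp_ne_zero (π * Complex.I / 4)
    tauto
  have htop : stabilizer SL(2, ℤ) s = ⊤ := by
    rw [eq_top_iff, ← SpecialLinearGroup.SL2Z_generators, Subgroup.closure_le]
    exact Set.insert_subset hS (Set.singleton_subset_iff.mpr hT)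
  obtain ⟨γ, him⟩ := exists_one_half_le_im_smul ⟨τ, hτ⟩
  have hγτ : γ • (⟨τ, hτ⟩ : ℍ) ∈ s := ⟨theta00_ne_zero_of_half_le_im him,
    theta01_ne_zero_of_half_le_im him, theta10_ne_zero_of_half_le_im him⟩
  have hγ : γ ∈ stabilizer SL(2, ℤ) s := htop ▸ Subgroup.mem_top γ
  exact (mem_stabilizer_set.mp hγ ⟨τ, hτ⟩).mp hγτ

lemma one_sub_lambdaFn {τ : ℂ} (hτ : 0 < τ.im) :
    1 - lambdaFn τ = theta01 τ ^ 4 / theta00 τ ^ 4 := by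
  rw [lambdaFn, eq_div_iff (pow_ne_zero 4 (theta_ne_zero hτ).1), sub_mul, one_mul,
    div_mul_cancel₀ _ (pow_ne_zero 4 (theta_ne_zero hτ).1), theta00_pow_four hτ]
  ring

lemma lambdaFn_ne_zero {τ : ℂ} (hτ : 0 < τ.im) : lambdaFn τ ≠ 0 :=
  div_ne_zero (pow_ne_zero 4 (theta_ne_zero hτ).2.2) (pow_ne_zero 4 (theta_ne_zero hτ).1)

lemma lambdaFn_ne_one {τ : ℂ} (hτ : 0 < τ.im) : lambdaFn τ ≠ 1 := by
  rw [ne_comm, ← sub_ne_zero, one_sub_lambdaFn hτ]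
  exact div_ne_zero (pow_ne_zero 4 (theta_ne_zero hτ).2.1) (pow_ne_zero 4 (theta_ne_zero hτ).1)

lemma lambdaFn_neg_inv {τ : ℂ} (hτ : 0 < τ.im) : lambdaFn (-1 / τ) = 1 - lambdaFn τ := by
  rw [one_sub_lambdaFn hτ, lambdaFn, theta10_neg_inv hτ, theta00_neg_inv hτ, mul_pow, mul_pow,
    mul_div_mul_left _ _ (pow_ne_zero 4 (neg_I_mul_cpow_half_ne_zero hτ))]

lemma lambdaFn_add_one {τ : ℂ} (hτ : 0 < τ.im) :
    lambdaFn (τ + 1) = lambdaFn τ / (lambdaFn τ - 1) := by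
  have h4 : cexp (π * I / 4) ^ 4 = -1 := by
    rw [← Complex.exp_nat_mul, show ((4 : ℕ) : ℂ) * (π * I / 4) = π * I by push_cast; ring,
      exp_pi_mul_I]
  obtain ⟨h00, h01, -⟩ := theta_ne_zero hτ
  rw [← neg_sub, one_sub_lambdaFn hτ, lambdaFn, lambdaFn, theta10_add_one, theta00_add_one,
    mul_pow, h4]
  field_simp

lemma lambdaFn_sub_one {τ : ℂ} (hτ : 0 < τ.im) :
    lambdaFn (τ - 1) = lambdaFn τ / (lambdaFn τ - 1) := by
  have hτ' : 0 < (τ - 1).im := by simpa using hτ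
  have h := lambdaFn_add_one hτ'
  rw [sub_add_cancel] at h
  have h1 := sub_ne_zero.mpr (lambdaFn_ne_one hτ')
  rw [h]
  field_simp
  ring

/-- `λ` never takes values 0, 1 on `ℍ`, and its transformation under `W` and `W²`. -/
theorem lambda_W_action (τ : ℂ) (hτ : 0 < τ.im) :
    lambdaFn τ ≠ 0 ∧ lambdaFn τ ≠ 1 ∧
    lambdaFn (-(τ + 1) / τ) = 1 - 1 / lambdaFn τ ∧
    lambdaFn (-1 / (τ + 1)) = 1 / (1 - lambdaFn τ) := by
  have h0 := lambdaFn_ne_zero hτ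
  have h1 := sub_ne_zero.mpr (lambdaFn_ne_one hτ).symm
  refine ⟨h0, lambdaFn_ne_one hτ, ?_, ?_⟩
  · have hτ0 := ne_zero_of_im_pos hτ
    rw [show -(τ + 1) / τ = -1 / τ - 1 by field_simp; ring,
      lambdaFn_sub_one (im_neg_one_div_pos hτ), lambdaFn_neg_inv hτ, sub_sub_cancel_left]
    field_simp
    ring
  · rw [lambdaFn_neg_inv (by simpa using hτ), lambdaFn_add_one hτ, ← neg_sub 1]
    field_simp
    ring
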